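/- arXiv:2104.13960 — 9 statements merged into one kernel-verified Lean document; each statement's English description precedes it below -/
import Mathlib

section
/- Let Δ ∈ ℝ and let a, b, c, u, v, w : ℕ → ℝ be sequences with c₀ = u₀ = 0. Let X and Z be the ℝ-linear endomorphisms of the space ℕ →₀ ℝ of finitely supported real sequences determined on the standard basis (eₙ) by X eₙ = cₙ e_{n−1} + bₙ eₙ + aₙ e_{n+1} and Z eₙ = uₙ e_{n−1} + vₙ eₙ + wₙ e_{n+1} (no e_{−1} term occurs since c₀ = u₀ = 0). Then Z∘X − X∘Z = Z∘Z + Δ·id if and only if for all n ≥ 1: cₙ u_{n−1} − c_{n−1} uₙ − u_{n−1} uₙ = 0, bₙ uₙ − b_{n−1} uₙ + cₙ v_{n−1} − uₙ v_{n−1} − cₙ vₙ − uₙ vₙ = 0, and for all n ≥ 0: −Δ − a_{n−1} uₙ + aₙ u_{n+1} − vₙ² + cₙ w_{n−1} − uₙ w_{n−1} − c_{n+1} wₙ − u_{n+1} wₙ = 0 (terms with index −1 read as 0), aₙ v_{n+1} − aₙ vₙ + bₙ wₙ − b_{n+1} wₙ − vₙ wₙ − v_{n+1} wₙ = 0, and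 aₙ w_{n+1} − a_{n+1} wₙ − wₙ w_{n+1} = 0. -/
set_option maxHeartbeats 2000000 in
/-- Tridiagonal actions `X eₙ = cₙ e_{n−1} + bₙ eₙ + aₙ e_{n+1}` and
`Z eₙ = uₙ e_{n−1} + vₙ eₙ + wₙ e_{n+1}` (with `c₀ = u₀ = 0`, so no `e_{−1}` term occurs)
define a representation of the algebra `[Z,X] = Z² + Δ` iff the coefficient equations hold. -/
theorem stmt_0 (Δ : ℝ) (a b c u v w : ℕ → ℝ)
    (hc0 : c 0 = 0) (hu0 : u 0 = 0)
    (X Z : (ℕ →₀ ℝ) →ₗ[ℝ] (ℕ →₀ ℝ))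
    (hX : ∀ n : ℕ, X (Finsupp.single n 1) =
      c n • Finsupp.single (n - 1) 1 + b n • Finsupp.single n 1
        + a n • Finsupp.single (n + 1) 1)
    (hZ : ∀ n : ℕ, Z (Finsupp.single n 1) =
      u n • Finsupp.single (n - 1) 1 + v n • Finsupp.single n 1
        + w n • Finsupp.single (n + 1) 1) :
    Z ∘ₗ X - X ∘ₗ Z = Z ∘ₗ Z + Δ • LinearMap.id ↔
      ((∀ n : ℕ, 1 ≤ n →
          c n * u (n - 1) - c (n - 1) * u n - u (n - 1) * u n = 0 ∧
          b n * u n - b (n - 1) * u n + c n * v (n - 1) - u n * v (n - 1)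
            - c n * v n - u n * v n = 0) ∧
       (∀ n : ℕ,
          -Δ - a (n - 1) * u n + a n * u (n + 1) - v n ^ 2 + c n * w (n - 1)
            - u n * w (n - 1) - c (n + 1) * w n - u (n + 1) * w n = 0 ∧
          a n * v (n + 1) - a n * v n + b n * w n - b (n + 1) * w n
            - v n * w n - v (n + 1) * w n = 0 ∧
          a n * w (n + 1) - a (n + 1) * w n - w n * w (n + 1) = 0)) := by

  classical
  have e1 : ∀ k : ℕ, k + 2 - 1 = k + 1 := fun k => rfl
  have e2 : ∀ k : ℕ, k + 1 - 1 = k := fun k => rfl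
  have e3 : (1 : ℕ) - 1 = 0 := rfl
  have e4 : (2 : ℕ) - 1 = 1 := rfl
  have e5 : (0 : ℕ) - 1 = 0 := rfl
  have hext : (Z ∘ₗ X - X ∘ₗ Z = Z ∘ₗ Z + Δ • LinearMap.id) ↔
      ∀ n : ℕ, Z (X (Finsupp.single n 1)) - X (Z (Finsupp.single n 1)) =
        Z (Z (Finsupp.single n 1)) + Δ • Finsupp.single n 1 := by
    constructor
    · intro h n
      have := LinearMap.congr_fun h (Finsupp.single n 1)
      simpa using this
    · intro h
      apply Finsupp.lhom_ext
      intro n r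
      have hs : (Finsupp.single n r : ℕ →₀ ℝ) = r • Finsupp.single n 1 := by
        simp [Finsupp.smul_single]
      rw [hs]
      simp only [LinearMap.sub_apply, LinearMap.comp_apply, LinearMap.add_apply,
        LinearMap.smul_apply, LinearMap.id_apply, map_smul]
      rw [h n]
  rw [hext]
  constructor
  · intro h
    refine ⟨fun n hn => ?_, fun n => ?_⟩
    · rcases Nat.lt_or_ge n 2 with h2 | h2
      · obtain rfl : n = 1 := by omega
        constructor
        · simp [hc0, hu0]
        · have hk := DFunLike.congr_fun (h (1)) (0)
          simp only [hX, hZ, map_add, map_smul, Finsupp.coe_add, Finsupp.coe_sub, Finsupp.coe_smul,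
      Pi.add_apply, Pi.sub_apply, Pi.smul_apply, smul_eq_mul, Finsupp.single_apply,
      e1, e2, e3, e4, e5, hc0, hu0, mul_zero, zero_mul, add_zero, zero_add] at hk ⊢
          split_ifs at hk <;> first | omega | (exact False.elim (by assumption)) | skip
          all_goals linarith [hk]
      · obtain ⟨k, rfl⟩ : ∃ k, n = k + 2 := ⟨n - 2, by omega⟩
        constructor
        · have hk := DFunLike.congr_fun (h (k+2)) (k)
          simp only [hX, hZ, map_add, map_smul, Finsupp.coe_add, Finsupp.coe_sub, Finsupp.coe_smul,
      Pi.add_apply, Pi.sub_apply, Pi.smul_apply, smul_eq_mul, Finsupp.single_apply,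
      e1, e2, e3, e4, e5, hc0, hu0, mul_zero, zero_mul, add_zero, zero_add] at hk ⊢
          split_ifs at hk <;> first | omega | (exact False.elim (by assumption)) | skip
          all_goals linarith [hk]
        · have hk := DFunLike.congr_fun (h (k+2)) (k+1)
          simp only [hX, hZ, map_add, map_smul, Finsupp.coe_add, Finsupp.coe_sub, Finsupp.coe_smul,
      Pi.add_apply, Pi.sub_apply, Pi.smul_apply, smul_eq_mul, Finsupp.single_apply,
      e1, e2, e3, e4, e5, hc0, hu0, mul_zero, zero_mul, add_zero, zero_add] at hk ⊢
          split_ifs at hk <;> first | omega | (exact False.elim (by assumption)) | skip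
          all_goals linarith [hk]
    · rcases Nat.lt_or_ge n 1 with hn1 | hn1
      · obtain rfl : n = 0 := by omega
        refine ⟨?_, ?_, ?_⟩
        · have hk := DFunLike.congr_fun (h (0)) (0)
          simp only [hX, hZ, map_add, map_smul, Finsupp.coe_add, Finsupp.coe_sub, Finsupp.coe_smul,
      Pi.add_apply, Pi.sub_apply, Pi.smul_apply, smul_eq_mul, Finsupp.single_apply,
      e1, e2, e3, e4, e5, hc0, hu0, mul_zero, zero_mul, add_zero, zero_add] at hk ⊢
          split_ifs at hk <;> first | omega | (exact False.elim (by assumption)) | skip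
          all_goals linarith [hk]
        · have hk := DFunLike.congr_fun (h (0)) (1)
          simp only [hX, hZ, map_add, map_smul, Finsupp.coe_add, Finsupp.coe_sub, Finsupp.coe_smul,
      Pi.add_apply, Pi.sub_apply, Pi.smul_apply, smul_eq_mul, Finsupp.single_apply,
      e1, e2, e3, e4, e5, hc0, hu0, mul_zero, zero_mul, add_zero, zero_add] at hk ⊢
          split_ifs at hk <;> first | omega | (exact False.elim (by assumption)) | skip
          all_goals linarith [hk]
        · have hk := DFunLike.congr_fun (h (0)) (2)
          simp only [hX, hZ, map_add, map_smul, Finsupp.coe_add, Finsupp.coe_sub, Finsupp.coe_smul,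
      Pi.add_apply, Pi.sub_apply, Pi.smul_apply, smul_eq_mul, Finsupp.single_apply,
      e1, e2, e3, e4, e5, hc0, hu0, mul_zero, zero_mul, add_zero, zero_add] at hk ⊢
          split_ifs at hk <;> first | omega | (exact False.elim (by assumption)) | skip
          all_goals linarith [hk]
      · rcases Nat.lt_or_ge n 2 with hn2 | hn2
        · obtain rfl : n = 1 := by omega
          refine ⟨?_, ?_, ?_⟩
          · have hk := DFunLike.congr_fun (h (1)) (1)
            simp only [hX, hZ, map_add, map_smul, Finsupp.coe_add, Finsupp.coe_sub, Finsupp.coe_smul,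
      Pi.add_apply, Pi.sub_apply, Pi.smul_apply, smul_eq_mul, Finsupp.single_apply,
      e1, e2, e3, e4, e5, hc0, hu0, mul_zero, zero_mul, add_zero, zero_add] at hk ⊢
            split_ifs at hk <;> first | omega | (exact False.elim (by assumption)) | skip
            all_goals linarith [hk]
          · have hk := DFunLike.congr_fun (h (1)) (2)
            simp only [hX, hZ, map_add, map_smul, Finsupp.coe_add, Finsupp.coe_sub, Finsupp.coe_smul,
      Pi.add_apply, Pi.sub_apply, Pi.smul_apply, smul_eq_mul, Finsupp.single_apply,
      e1, e2, e3, e4, e5, hc0, hu0, mul_zero, zero_mul, add_zero, zero_add] at hk ⊢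
            split_ifs at hk <;> first | omega | (exact False.elim (by assumption)) | skip
            all_goals linarith [hk]
          · have hk := DFunLike.congr_fun (h (1)) (3)
            simp only [hX, hZ, map_add, map_smul, Finsupp.coe_add, Finsupp.coe_sub, Finsupp.coe_smul,
      Pi.add_apply, Pi.sub_apply, Pi.smul_apply, smul_eq_mul, Finsupp.single_apply,
      e1, e2, e3, e4, e5, hc0, hu0, mul_zero, zero_mul, add_zero, zero_add] at hk ⊢
            split_ifs at hk <;> first | omega | (exact False.elim (by assumption)) | skip
            all_goals linarith [hk]
        · obtain ⟨k, rfl⟩ : ∃ k, n = k + 2 := ⟨n - 2, by omega⟩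
          refine ⟨?_, ?_, ?_⟩
          · have hk := DFunLike.congr_fun (h (k+2)) (k+2)
            simp only [hX, hZ, map_add, map_smul, Finsupp.coe_add, Finsupp.coe_sub, Finsupp.coe_smul,
      Pi.add_apply, Pi.sub_apply, Pi.smul_apply, smul_eq_mul, Finsupp.single_apply,
      e1, e2, e3, e4, e5, hc0, hu0, mul_zero, zero_mul, add_zero, zero_add] at hk ⊢
            split_ifs at hk <;> first | omega | (exact False.elim (by assumption)) | skip
            all_goals linarith [hk]
          · have hk := DFunLike.congr_fun (h (k+2)) (k+3)
            simp only [hX, hZ, map_add, map_smul, Finsupp.coe_add, Finsupp.coe_sub, Finsupp.coe_smul,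
      Pi.add_apply, Pi.sub_apply, Pi.smul_apply, smul_eq_mul, Finsupp.single_apply,
      e1, e2, e3, e4, e5, hc0, hu0, mul_zero, zero_mul, add_zero, zero_add] at hk ⊢
            split_ifs at hk <;> first | omega | (exact False.elim (by assumption)) | skip
            all_goals linarith [hk]
          · have hk := DFunLike.congr_fun (h (k+2)) (k+4)
            simp only [hX, hZ, map_add, map_smul, Finsupp.coe_add, Finsupp.coe_sub, Finsupp.coe_smul,
      Pi.add_apply, Pi.sub_apply, Pi.smul_apply, smul_eq_mul, Finsupp.single_apply,
      e1, e2, e3, e4, e5, hc0, hu0, mul_zero, zero_mul, add_zero, zero_add] at hk ⊢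
            split_ifs at hk <;> first | omega | (exact False.elim (by assumption)) | skip
            all_goals linarith [hk]
  · rintro ⟨h12, h345⟩ n
    rcases Nat.lt_or_ge n 1 with hn1 | hn1
    · obtain rfl : n = 0 := by omega
      have H3 := (h345 0).1
      have H4 := (h345 0).2.1
      have H5 := (h345 0).2.2
      rw [pow_two] at H3
      simp only [e3, e4, e5, hc0, hu0, mul_zero, zero_mul, add_zero, zero_add, sub_zero] at H3 H4 H5
      ext m
      simp only [hX, hZ, map_add, map_smul, Finsupp.coe_add, Finsupp.coe_sub, Finsupp.coe_smul,
      Pi.add_apply, Pi.sub_apply, Pi.smul_apply, smul_eq_mul, Finsupp.single_apply,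
      e1, e2, e3, e4, e5, hc0, hu0, mul_zero, zero_mul, add_zero, zero_add]
      split_ifs <;> first | omega | (exact False.elim (by assumption)) | linarith [H3, H4, H5]
    · rcases Nat.lt_or_ge n 2 with hn2 | hn2
      · obtain rfl : n = 1 := by omega
        have H1 := (h12 1 le_rfl).1
        have H2 := (h12 1 le_rfl).2
        have H3 := (h345 1).1
        have H4 := (h345 1).2.1
        have H5 := (h345 1).2.2
        rw [pow_two] at H3
        simp only [e3, e4, e5, hc0, hu0, mul_zero, zero_mul, add_zero, zero_add, sub_zero] at H1 H2 H3 H4 H5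
        ext m
        simp only [hX, hZ, map_add, map_smul, Finsupp.coe_add, Finsupp.coe_sub, Finsupp.coe_smul,
      Pi.add_apply, Pi.sub_apply, Pi.smul_apply, smul_eq_mul, Finsupp.single_apply,
      e1, e2, e3, e4, e5, hc0, hu0, mul_zero, zero_mul, add_zero, zero_add]
        split_ifs <;> first | omega | (exact False.elim (by assumption)) | linarith [H1, H2, H3, H4, H5]
      · obtain ⟨k, rfl⟩ : ∃ k, n = k + 2 := ⟨n - 2, by omega⟩
        have H1 := (h12 (k+2) (by omega)).1
        have H2 := (h12 (k+2) (by omega)).2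
        have H3 := (h345 (k+2)).1
        have H4 := (h345 (k+2)).2.1
        have H5 := (h345 (k+2)).2.2
        rw [pow_two] at H3
        simp only [e1, e2] at H1 H2 H3 H4 H5
        ext m
        simp only [hX, hZ, map_add, map_smul, Finsupp.coe_add, Finsupp.coe_sub, Finsupp.coe_smul,
      Pi.add_apply, Pi.sub_apply, Pi.smul_apply, smul_eq_mul, Finsupp.single_apply,
      e1, e2, e3, e4, e5, hc0, hu0, mul_zero, zero_mul, add_zero, zero_add]
        split_ifs <;> first | omega | (exact False.elim (by assumption)) | linarith [H1, H2, H3, H4, H5]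
end

section
/- Let Δ, v₀, δ₀, φ₀ ∈ ℝ and set D = δ₀ − φ₀. Define vₖ = ((D − 1)(D + 1) v₀) / ((D − 2k + 1)(D − 2k − 1)) and assume D − 2k + 1 ≠ 0 and D − 2k − 1 ≠ 0 for all 0 ≤ k ≤ n − 1, and D − 2n + 1 ≠ 0. Then for every n ≥ 1: Σ_{k=0}^{n−1} (Δ + vₖ²)(D − 2k) = n (D − n + 1)(Δ (D − 2n + 1)² + v₀² (D − 1)²) / (D − 2n + 1)². -/
/-!
Split the summand as `Δ (D − 2k) + vₖ² (D − 2k)`. The first part is an arithmetic progression.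
For the second, `1/(x − 1)² − 1/(x + 1)² = 4x/((x + 1)(x − 1))²` at `x = D − 2k` gives
`vₖ² (D − 2k) = c²/4 · (1/(D − 2k − 1)² − 1/(D − 2k + 1)²)` with `c = (D − 1)(D + 1)v₀`,
and the sum telescopes to `c²/4 · (1/(D − 2n + 1)² − 1/(D + 1)²)`.
-/

open Finset

lemma sum_range_sub_two_mul (D : ℝ) (n : ℕ) :
    ∑ k ∈ range n, (D - 2 * k) = n * (D - n + 1) := by
  induction n with
  | zero => simp
  | succ n ih =>
    rw [sum_range_succ, ih]
    push_cast
    ring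

lemma inv_sq_sub_one_sub_inv_sq_add_one {x : ℝ} (h₁ : x + 1 ≠ 0) (h₂ : x - 1 ≠ 0) :
    ((x - 1) ^ 2)⁻¹ - ((x + 1) ^ 2)⁻¹ = 4 * x / ((x + 1) * (x - 1)) ^ 2 := by
  field_simp
  ring

lemma sum_range_sub_two_mul_div_sq (D : ℝ) (n : ℕ)
    (h : ∀ k < n, D - 2 * k + 1 ≠ 0 ∧ D - 2 * k - 1 ≠ 0) :
    ∑ k ∈ range n, (D - 2 * k) / ((D - 2 * k + 1) * (D - 2 * k - 1)) ^ 2 =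
      (((D - 2 * n + 1) ^ 2)⁻¹ - ((D + 1) ^ 2)⁻¹) / 4 := by
  set f : ℕ → ℝ := fun k => ((D - 2 * k + 1) ^ 2)⁻¹
  have hterm : ∀ k ∈ range n,
      (D - 2 * k) / ((D - 2 * k + 1) * (D - 2 * k - 1)) ^ 2 = (f (k + 1) - f k) / 4 := by
    intro k hk
    obtain ⟨h₁, h₂⟩ := h k (mem_range.mp hk)
    have hshift : D - 2 * ((k + 1 : ℕ) : ℝ) + 1 = D - 2 * k - 1 := by push_cast; ring
    simp only [f, hshift]
    rw [inv_sq_sub_one_sub_inv_sq_add_one h₁ h₂]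
    ring
  rw [sum_congr rfl hterm, ← sum_div, sum_range_sub]
  simp [f]

theorem stmt_6_general (Δ v₀ δ₀ φ₀ : ℝ) (v : ℕ → ℝ)
    (hv : ∀ k : ℕ, v k = ((δ₀ - φ₀) - 1) * ((δ₀ - φ₀) + 1) * v₀ /
      (((δ₀ - φ₀) - 2 * k + 1) * ((δ₀ - φ₀) - 2 * k - 1)))
    (n : ℕ)
    (hne : ∀ k : ℕ, k ≤ n - 1 →
      (δ₀ - φ₀) - 2 * k + 1 ≠ 0 ∧ (δ₀ - φ₀) - 2 * k - 1 ≠ 0)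
    (hnen : (δ₀ - φ₀) - 2 * n + 1 ≠ 0) :
    ∑ k ∈ Finset.range n, (Δ + v k ^ 2) * ((δ₀ - φ₀) - 2 * k) =
      (n : ℝ) * ((δ₀ - φ₀) - n + 1) *
        (Δ * ((δ₀ - φ₀) - 2 * n + 1) ^ 2 + v₀ ^ 2 * ((δ₀ - φ₀) - 1) ^ 2) /
        ((δ₀ - φ₀) - 2 * n + 1) ^ 2 := by
  set D := δ₀ - φ₀
  have hD : D + 1 ≠ 0 := by simpa using (hne 0 (Nat.zero_le _)).1
  have hsplit : ∀ k ∈ range n, (Δ + v k ^ 2) * (D - 2 * k) = Δ * (D - 2 * k) +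
      ((D - 1) * (D + 1) * v₀) ^ 2 * ((D - 2 * k) / ((D - 2 * k + 1) * (D - 2 * k - 1)) ^ 2) := by
    intro k _
    rw [hv, div_pow]
    ring
  rw [sum_congr rfl hsplit, sum_add_distrib, ← mul_sum, ← mul_sum, sum_range_sub_two_mul,
    sum_range_sub_two_mul_div_sq D n fun k hk => hne k (by omega)]
  -- otherwise `field_simp` normalises `2 * n` to `n * 2` and no longer sees `hnen`
  generalize hX : D - 2 * n + 1 = X at hnen ⊢
  field_simp
  rw [← hX]
  ring

/-- Closed-form evaluation of the telescopic sum
`Σ_{k=0}^{n−1} (Δ + vₖ²)(D − 2k)` where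
`vₖ = (D − 1)(D + 1) v₀ / ((D − 2k + 1)(D − 2k − 1))` and `D = δ₀ − φ₀`. -/
theorem stmt_6 (Δ v₀ δ₀ φ₀ : ℝ) (v : ℕ → ℝ)
    (hv : ∀ k : ℕ, v k = ((δ₀ - φ₀) - 1) * ((δ₀ - φ₀) + 1) * v₀ /
      (((δ₀ - φ₀) - 2 * k + 1) * ((δ₀ - φ₀) - 2 * k - 1)))
    (n : ℕ) (hn : 1 ≤ n)
    (hne : ∀ k : ℕ, k ≤ n - 1 →
      (δ₀ - φ₀) - 2 * k + 1 ≠ 0 ∧ (δ₀ - φ₀) - 2 * k - 1 ≠ 0)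
    (hnen : (δ₀ - φ₀) - 2 * n + 1 ≠ 0) :
    ∑ k ∈ Finset.range n, (Δ + v k ^ 2) * ((δ₀ - φ₀) - 2 * k) =
      (n : ℝ) * ((δ₀ - φ₀) - n + 1) *
        (Δ * ((δ₀ - φ₀) - 2 * n + 1) ^ 2 + v₀ ^ 2 * ((δ₀ - φ₀) - 1) ^ 2) /
        ((δ₀ - φ₀) - 2 * n + 1) ^ 2 :=
  stmt_6_general Δ v₀ δ₀ φ₀ v hv n hne hnen
end

section
/- Let Δ, v₀, δ₀, φ₀ ∈ ℝ, set D = δ₀ − φ₀ and vₙ = ((D − 1)(D + 1) v₀) / ((D − 2n + 1)(D − 2n − 1)). Let κ : ℕ → ℝ satisfy κ₀ = 0 and, for all n ≥ 0, Δ + vₙ² = (D − 2(n+1)) κ_{n+1} − (D − 2(n−1)) κₙ. Assume D − 2k ≠ 0, D − 2k + 1 ≠ 0 and D − 2k − 1 ≠ 0 for all relevant indices k. Then for all n ≥ 0: κₙ = n (D − n + 1)(Δ (D − 2n + 1)² + v₀² (D − 1)²) / ((D − 2n + 1)² (D − 2n)(D − 2n + 2)). -/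
/-- Solving `Δ + vₙ² = (D − 2(n+1)) κ_{n+1} − (D − 2(n−1)) κₙ` with `κ₀ = 0`
(where `D = δ₀ − φ₀` and `vₙ` is the closed-form solution) gives the closed
form for `κₙ = uₙ w_{n−1}`. -/
theorem stmt_7 (Δ v₀ δ₀ φ₀ : ℝ) (v κ : ℕ → ℝ)
    (hv : ∀ n : ℕ, v n = ((δ₀ - φ₀) - 1) * ((δ₀ - φ₀) + 1) * v₀ /
      (((δ₀ - φ₀) - 2 * n + 1) * ((δ₀ - φ₀) - 2 * n - 1)))
    (hκ0 : κ 0 = 0)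
    (hrec : ∀ n : ℕ, Δ + v n ^ 2 =
      ((δ₀ - φ₀) - 2 * ((n : ℝ) + 1)) * κ (n + 1)
        - ((δ₀ - φ₀) - 2 * ((n : ℝ) - 1)) * κ n)
    (hne : ∀ k : ℕ, (δ₀ - φ₀) - 2 * k ≠ 0 ∧ (δ₀ - φ₀) - 2 * k + 1 ≠ 0 ∧
      (δ₀ - φ₀) - 2 * k - 1 ≠ 0 ∧ (δ₀ - φ₀) - 2 * k + 2 ≠ 0) :
    ∀ n : ℕ, κ n = (n : ℝ) * ((δ₀ - φ₀) - n + 1) *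
      (Δ * ((δ₀ - φ₀) - 2 * n + 1) ^ 2 + v₀ ^ 2 * ((δ₀ - φ₀) - 1) ^ 2) /
      (((δ₀ - φ₀) - 2 * n + 1) ^ 2 * ((δ₀ - φ₀) - 2 * n) *
        ((δ₀ - φ₀) - 2 * n + 2)) := by
  intro n
  induction n with
  | zero => simp [hκ0]
  | succ n ih =>
    obtain ⟨h1, h2, h3, h4⟩ := hne n
    obtain ⟨h5, h6, h7, h8⟩ := hne (n + 1)
    push_cast at h5 h6 h7 h8 ⊢
    have e := hrec n
    rw [hv n, ih] at e
    have hk : κ (n + 1) = (Δ +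
        (((δ₀ - φ₀) - 1) * ((δ₀ - φ₀) + 1) * v₀ /
          (((δ₀ - φ₀) - 2 * n + 1) * ((δ₀ - φ₀) - 2 * n - 1))) ^ 2 +
        ((δ₀ - φ₀) - 2 * ((n : ℝ) - 1)) *
          ((n : ℝ) * ((δ₀ - φ₀) - n + 1) *
            (Δ * ((δ₀ - φ₀) - 2 * n + 1) ^ 2 + v₀ ^ 2 * ((δ₀ - φ₀) - 1) ^ 2) /
            (((δ₀ - φ₀) - 2 * n + 1) ^ 2 * ((δ₀ - φ₀) - 2 * n) *
              ((δ₀ - φ₀) - 2 * n + 2)))) /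
        ((δ₀ - φ₀) - 2 * ((n : ℝ) + 1)) := by
      rw [eq_div_iff h5, mul_comm]
      linarith [e]
    rw [hk]
    field_simp
    ring
end

section
/- Let Δ < 0, v₀, δ₀, φ₀ ∈ ℝ, set D = δ₀ − φ₀ and define κₙ = n (D − n + 1)(Δ (D − 2n + 1)² + v₀² (D − 1)²) / ((D − 2n + 1)² (D − 2n)(D − 2n + 2)). Let N be a natural number such that D − 2(N+1) + 1 ≠ 0, D − 2(N+1) ≠ 0, and D − 2(N+1) + 2 ≠ 0. Then κ_{N+1} = 0 if and only if D = N (i.e. N = δ₀ − φ₀), or √(−Δ)·(D − 2N − 1) = v₀ (D − 1), or √(−Δ)·(D − 2N − 1) = −v₀ (D − 1); the latter two conditions are equivalent to N + 1 = −½[φ₀ − δ₀ − 1 ± (φ₀ − δ₀ + 1) v₀ / √(−Δ)]. -/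
/-- For `Δ < 0` and `D = δ₀ − φ₀`, the finite-dimensionality condition
`κ_{N+1} = 0` holds iff `D = N`, or `√(−Δ)(D − 2N − 1) = ± v₀(D − 1)`;
the latter two conditions are equivalent to
`N + 1 = −½ [φ₀ − δ₀ − 1 ± (φ₀ − δ₀ + 1) v₀ / √(−Δ)]`. -/
theorem stmt_11 (Δ v₀ δ₀ φ₀ : ℝ) (hΔ : Δ < 0) (κ : ℕ → ℝ)
    (hκ : ∀ n : ℕ, κ n = (n : ℝ) * ((δ₀ - φ₀) - n + 1) *
      (Δ * ((δ₀ - φ₀) - 2 * n + 1) ^ 2 + v₀ ^ 2 * ((δ₀ - φ₀) - 1) ^ 2) /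
      (((δ₀ - φ₀) - 2 * n + 1) ^ 2 * ((δ₀ - φ₀) - 2 * n) *
        ((δ₀ - φ₀) - 2 * n + 2)))
    (N : ℕ)
    (h1 : (δ₀ - φ₀) - 2 * ((N : ℝ) + 1) + 1 ≠ 0)
    (h2 : (δ₀ - φ₀) - 2 * ((N : ℝ) + 1) ≠ 0)
    (h3 : (δ₀ - φ₀) - 2 * ((N : ℝ) + 1) + 2 ≠ 0) :
    (κ (N + 1) = 0 ↔
      (δ₀ - φ₀) = (N : ℝ) ∨
      Real.sqrt (-Δ) * ((δ₀ - φ₀) - 2 * N - 1) = v₀ * ((δ₀ - φ₀) - 1) ∨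
      Real.sqrt (-Δ) * ((δ₀ - φ₀) - 2 * N - 1) = -v₀ * ((δ₀ - φ₀) - 1)) ∧
    ((Real.sqrt (-Δ) * ((δ₀ - φ₀) - 2 * N - 1) = v₀ * ((δ₀ - φ₀) - 1) ∨
      Real.sqrt (-Δ) * ((δ₀ - φ₀) - 2 * N - 1) = -v₀ * ((δ₀ - φ₀) - 1)) ↔
     ((N : ℝ) + 1 = -(1 / 2) * ((φ₀ - δ₀ - 1)
        + (φ₀ - δ₀ + 1) * v₀ / Real.sqrt (-Δ)) ∨
      (N : ℝ) + 1 = -(1 / 2) * ((φ₀ - δ₀ - 1)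
        - (φ₀ - δ₀ + 1) * v₀ / Real.sqrt (-Δ)))) := by
  have hΔ' : (0:ℝ) < -Δ := by linarith
  set s := Real.sqrt (-Δ) with hsdef
  have hs : 0 < s := Real.sqrt_pos.mpr hΔ'
  have hsne : s ≠ 0 := ne_of_gt hs
  have hs2 : s ^ 2 = -Δ := Real.sq_sqrt hΔ'.le
  constructor
  · rw [hκ]
    push_cast
    rw [div_eq_zero_iff]
    have hden : ¬ (((δ₀ - φ₀) - 2 * ((N:ℝ)+1) + 1) ^ 2 * ((δ₀ - φ₀) - 2 * ((N:ℝ)+1)) *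
        ((δ₀ - φ₀) - 2 * ((N:ℝ)+1) + 2) = 0) := by
      exact mul_ne_zero (mul_ne_zero (pow_ne_zero 2 h1) h2) h3
    have hQ : (Δ * ((δ₀ - φ₀) - 2 * ((N:ℝ)+1) + 1) ^ 2 + v₀ ^ 2 * ((δ₀ - φ₀) - 1) ^ 2)
        = -((s * ((δ₀ - φ₀) - 2 * N - 1) - v₀ * ((δ₀ - φ₀) - 1)) *
            (s * ((δ₀ - φ₀) - 2 * N - 1) + v₀ * ((δ₀ - φ₀) - 1))) := by
      linear_combination (((δ₀ - φ₀) - 2 * ((N:ℝ)+1) + 1) ^ 2) * hs2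
    rw [hQ]
    have hN1 : ((N:ℝ) + 1) ≠ 0 := by positivity
    constructor
    · rintro (h | h)
      · rcases mul_eq_zero.mp h with h' | h'
        · rcases mul_eq_zero.mp h' with h'' | h''
          · exact absurd h'' hN1
          · left; linarith
        · rcases mul_eq_zero.mp (neg_eq_zero.mp h') with h'' | h''
          · right; left; linarith
          · right; right; linarith
      · exact absurd h hden
    · rintro (h | h | h)
      · left
        have hb : (δ₀ - φ₀) - ((N:ℝ)+1) + 1 = 0 := by linarith
        rw [show ((N:ℝ)+1) * ((δ₀ - φ₀) - ((N:ℝ)+1) + 1) = 0 from by rw [hb]; ring]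
        ring
      · left
        have hb : s * ((δ₀ - φ₀) - 2 * N - 1) - v₀ * ((δ₀ - φ₀) - 1) = 0 := by linarith
        rw [show -((s * ((δ₀ - φ₀) - 2 * (N:ℝ) - 1) - v₀ * ((δ₀ - φ₀) - 1)) *
            (s * ((δ₀ - φ₀) - 2 * (N:ℝ) - 1) + v₀ * ((δ₀ - φ₀) - 1))) = 0 from by
          rw [hb]; ring]
        ring
      · left
        have hb : s * ((δ₀ - φ₀) - 2 * N - 1) + v₀ * ((δ₀ - φ₀) - 1) = 0 := by linarith
        rw [show -((s * ((δ₀ - φ₀) - 2 * (N:ℝ) - 1) - v₀ * ((δ₀ - φ₀) - 1)) *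
            (s * ((δ₀ - φ₀) - 2 * (N:ℝ) - 1) + v₀ * ((δ₀ - φ₀) - 1))) = 0 from by
          rw [hb]; ring]
        ring
  · have e1 : (s * ((δ₀ - φ₀) - 2 * N - 1) = -v₀ * ((δ₀ - φ₀) - 1)) ↔
        ((N:ℝ) + 1 = -(1 / 2) * ((φ₀ - δ₀ - 1) + (φ₀ - δ₀ + 1) * v₀ / s)) := by
      constructor <;> intro h <;> field_simp at h ⊢ <;> linarith
    have e2 : (s * ((δ₀ - φ₀) - 2 * N - 1) = v₀ * ((δ₀ - φ₀) - 1)) ↔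
        ((N:ℝ) + 1 = -(1 / 2) * ((φ₀ - δ₀ - 1) - (φ₀ - δ₀ + 1) * v₀ / s)) := by
      constructor <;> intro h <;> field_simp at h ⊢ <;> linarith
    rw [e1, e2]
    tauto
end

section
/- Let a, b, c, d ∈ ℂ, set s = a + b + c + d, and assume s ≠ 0 and that 2n + s − 1, 2n + s − 2 and 2n + s − 3 are all nonzero. Set φ₀ = a + c − 1, δ₀ = −(b + d), v₀ = −i (a − b − c + d)/(2s), Δ = ¼. Then for every n ≥ 1: (n + φ₀)(n − δ₀ − 1) · n (n + φ₀ − δ₀ − 1)(Δ (2n + φ₀ − δ₀ − 1)² + v₀² (φ₀ − δ₀ + 1)²) / ((2n + φ₀ − δ₀ − 1)² (2n + φ₀ − δ₀)(2n + φ₀ − δ₀ − 2)) = (n + a + c − 1)(n + b + d − 1) · n (n + a + b + c + d − 2)(n + a + d − 1)(n + b + c − 1) / ((2n + a + b + c + d − 1)(2n + a + b + c + d − 2)² (2n + a + b + c + d − 3)). -/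
open Complex

set_option maxHeartbeats 1000000 in
/-- With `Δ = ¼`, `φ₀ = a + c − 1`, `δ₀ = −(b+d)`, `v₀ = −i(a−b−c+d)/(2s)`,
the coefficient `a_{n−1}cₙ` of the algebra representation equals the
off-diagonal recurrence coefficient of the monic continuous Hahn polynomials. -/
theorem stmt_13 (a b c d : ℂ) (hs : a + b + c + d ≠ 0) :
    ∀ n : ℕ, 1 ≤ n →
      2 * (n : ℂ) + (a + b + c + d) - 1 ≠ 0 →
      2 * (n : ℂ) + (a + b + c + d) - 2 ≠ 0 →
      2 * (n : ℂ) + (a + b + c + d) - 3 ≠ 0 →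
      ((n : ℂ) + (a + c - 1)) * ((n : ℂ) - (-(b + d)) - 1) *
        ((n : ℂ) * ((n : ℂ) + (a + c - 1) - (-(b + d)) - 1) *
          ((1 / 4) * (2 * (n : ℂ) + (a + c - 1) - (-(b + d)) - 1) ^ 2 +
            (-Complex.I * (a - b - c + d) / (2 * (a + b + c + d))) ^ 2 *
              ((a + c - 1) - (-(b + d)) + 1) ^ 2)) /
        ((2 * (n : ℂ) + (a + c - 1) - (-(b + d)) - 1) ^ 2 *
          (2 * (n : ℂ) + (a + c - 1) - (-(b + d))) *
          (2 * (n : ℂ) + (a + c - 1) - (-(b + d)) - 2)) =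
      ((n : ℂ) + a + c - 1) * ((n : ℂ) + b + d - 1) *
        ((n : ℂ) * ((n : ℂ) + a + b + c + d - 2) * ((n : ℂ) + a + d - 1) *
          ((n : ℂ) + b + c - 1)) /
        ((2 * (n : ℂ) + a + b + c + d - 1) *
          (2 * (n : ℂ) + a + b + c + d - 2) ^ 2 *
          (2 * (n : ℂ) + a + b + c + d - 3)) := by
  intro n hn h1 h2 h3
  have hv : (-Complex.I * (a - b - c + d) / (2 * (a + b + c + d))) ^ 2 *
      ((a + c - 1) - (-(b + d)) + 1) ^ 2 = -(a - b - c + d) ^ 2 / 4 := by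
    have h2s : (2 * (a + b + c + d)) ^ 2 ≠ 0 := by
      apply pow_ne_zero; simpa using hs
    rw [div_pow, mul_pow, neg_sq, Complex.I_sq, div_mul_eq_mul_div,
      div_eq_div_iff h2s (by norm_num : (4 : ℂ) ≠ 0)]
    ring
  rw [hv]
  rw [show (2 * (n : ℂ) + (a + c - 1) - (-(b + d)) - 1) ^ 2 *
        (2 * (n : ℂ) + (a + c - 1) - (-(b + d))) *
        (2 * (n : ℂ) + (a + c - 1) - (-(b + d)) - 2) =
      (2 * (n : ℂ) + a + b + c + d - 1) * (2 * (n : ℂ) + a + b + c + d - 2) ^ 2 *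
        (2 * (n : ℂ) + a + b + c + d - 3) from by ring,
    show ((n : ℂ) + (a + c - 1)) * ((n : ℂ) - (-(b + d)) - 1) *
        ((n : ℂ) * ((n : ℂ) + (a + c - 1) - (-(b + d)) - 1) *
          ((1 / 4) * (2 * (n : ℂ) + (a + c - 1) - (-(b + d)) - 1) ^ 2 +
            -(a - b - c + d) ^ 2 / 4)) =
      ((n : ℂ) + a + c - 1) * ((n : ℂ) + b + d - 1) *
        ((n : ℂ) * ((n : ℂ) + a + b + c + d - 2) * ((n : ℂ) + a + d - 1) *
          ((n : ℂ) + b + c - 1)) from by ring]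
end

section
/- Let a, b, c, d ∈ ℂ, set s = a + b + c + d, and assume s ≠ 0 and that 2n + s − 2, 2n + s − 1, 2n + s are all nonzero. Set φ₀ = a + c − 1, δ₀ = −(b + d), v₀ = −i (a − b − c + d)/(2s), and b̃₀ = (i/4)(a + b − c − d). Then for every n ≥ 0: ½ (δ₀ + φ₀ + 1)(φ₀ − δ₀ + 1)(φ₀ − δ₀ − 1) v₀ / ((2n + φ₀ − δ₀ − 1)(2n + φ₀ − δ₀ + 1)) + b̃₀ = i [ −(n + a + b + c + d − 1)(n + a + c)(n + a + d) / ((2n + a + b + c + d − 1)(2n + a + b + c + d)) + n (n + b + c − 1)(n + b + d − 1) / ((2n + a + b + c + d − 2)(2n + a + b + c + d − 1)) + a ]. -/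
open Complex

/-!
After substituting `φ₀ − δ₀ = s − 1` and `δ₀ + φ₀ + 1 = a + c − b − d`, the factor `s` in the
numerator of the normal form cancels the `2s` in `v₀`, so the left side is a constant plus a
multiple of `1 / ((2n + s − 2)(2n + s))`. The continuous Hahn coefficient has the same shape:
its two terms have a common pole at `2n + s − 1`, and the residues there cancel.
-/

theorem normalForm_numerator_eq {K : Type*} [Field K] [CharZero K] (a b c d i : K)
    (hs : a + b + c + d ≠ 0) :
    (1 / 2) * ((-(b + d)) + (a + c - 1) + 1) * ((a + c - 1) - (-(b + d)) + 1) *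
        ((a + c - 1) - (-(b + d)) - 1) * (-i * (a - b - c + d) / (2 * (a + b + c + d))) =
      -(i / 4) * ((a + c - b - d) * (a - b - c + d) * (a + b + c + d - 2)) := by
  field_simp
  ring

theorem continuousHahn_diag_eq {K : Type*} [Field K] [CharZero K] (a b c d x : K)
    (h₂ : 2 * x + a + b + c + d - 2 ≠ 0) (h₁ : 2 * x + a + b + c + d - 1 ≠ 0)
    (h₀ : 2 * x + a + b + c + d ≠ 0) :
    -(x + a + b + c + d - 1) * (x + a + c) * (x + a + d) /
          ((2 * x + a + b + c + d - 1) * (2 * x + a + b + c + d)) +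
        x * (x + b + c - 1) * (x + b + d - 1) /
          ((2 * x + a + b + c + d - 2) * (2 * x + a + b + c + d - 1)) + a =
      ((a + b - c - d) - (a + c - b - d) * (a - b - c + d) * (a + b + c + d - 2) /
          ((2 * x + a + b + c + d - 2) * (2 * x + a + b + c + d))) / 4 := by
  -- `field_simp` normalizes `2 * x` to `x * 2` before looking for the side conditions
  rw [mul_comm 2 x] at h₂ h₁ h₀
  field_simp
  ring

/-- With `Δ = ¼`, `φ₀ = a + c − 1`, `δ₀ = −(b+d)`, `v₀ = −i(a−b−c+d)/(2s)` and
`b̃₀ = (i/4)(a + b − c − d)`, the diagonal coefficient `bₙ` of the algebra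
representation equals the diagonal recurrence coefficient of the monic
continuous Hahn polynomials. -/
theorem stmt_14 (a b c d : ℂ) (hs : a + b + c + d ≠ 0) :
    ∀ n : ℕ,
      2 * (n : ℂ) + (a + b + c + d) - 2 ≠ 0 →
      2 * (n : ℂ) + (a + b + c + d) - 1 ≠ 0 →
      2 * (n : ℂ) + (a + b + c + d) ≠ 0 →
      (1 / 2) * ((-(b + d)) + (a + c - 1) + 1) *
          ((a + c - 1) - (-(b + d)) + 1) * ((a + c - 1) - (-(b + d)) - 1) *
          (-Complex.I * (a - b - c + d) / (2 * (a + b + c + d))) /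
          ((2 * (n : ℂ) + (a + c - 1) - (-(b + d)) - 1) *
            (2 * (n : ℂ) + (a + c - 1) - (-(b + d)) + 1)) +
        (Complex.I / 4) * (a + b - c - d) =
      Complex.I *
        (-((n : ℂ) + a + b + c + d - 1) * ((n : ℂ) + a + c) * ((n : ℂ) + a + d) /
            ((2 * (n : ℂ) + a + b + c + d - 1) * (2 * (n : ℂ) + a + b + c + d)) +
          (n : ℂ) * ((n : ℂ) + b + c - 1) * ((n : ℂ) + b + d - 1) /
            ((2 * (n : ℂ) + a + b + c + d - 2) *
              (2 * (n : ℂ) + a + b + c + d - 1)) +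
          a) := by
  intro n h₂ h₁ h₀
  simp only [← add_assoc] at h₂ h₁ h₀
  have hlower : 2 * (n : ℂ) + (a + c - 1) - (-(b + d)) - 1 = 2 * n + a + b + c + d - 2 := by ring
  have hupper : 2 * (n : ℂ) + (a + c - 1) - (-(b + d)) + 1 = 2 * n + a + b + c + d := by ring
  rw [normalForm_numerator_eq a b c d I hs, hlower, hupper, continuousHahn_diag_eq a b c d n h₂ h₁ h₀]
  ring
end

section
/- Let α, β ∈ ℝ and let N be a natural number, and assume 2n + α + β − 1, 2n + α + β and 2n + α + β + 1 are all nonzero. Set Δ = −¼, φ₀ = β, δ₀ = −(α + 1), v₀ = −(α + β + 2N + 2)/(2(α + β + 2)) (assuming α + β + 2 ≠ 0). Then for every n ≥ 1: (n + φ₀)(n − δ₀ − 1) · n (n + φ₀ − δ₀ − 1)(Δ (2n + φ₀ − δ₀ − 1)² + v₀² (φ₀ − δ₀ + 1)²) / ((2n + φ₀ − δ₀ − 1)² (2n + φ₀ − δ₀)(2n + φ₀ − δ₀ − 2)) = n (n + α)(n + β)(n + α + β)(n + α + β + N + 1)(N − n + 1) / ((2n + α + β − 1)(2n + α + β)² (2n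 + α + β + 1)). -/
set_option maxHeartbeats 2000000 in
/-- With `Δ = −¼`, `φ₀ = β`, `δ₀ = −(α+1)`, `v₀ = −(α+β+2N+2)/(2(α+β+2))`,
the coefficient `a_{n−1}cₙ` of the algebra representation equals the
off-diagonal recurrence coefficient of the monic Hahn polynomials. -/
theorem stmt_15 (α β : ℝ) (N : ℕ) (hαβ : α + β + 2 ≠ 0) :
    ∀ n : ℕ, 1 ≤ n →
      2 * (n : ℝ) + α + β - 1 ≠ 0 →
      2 * (n : ℝ) + α + β ≠ 0 →
      2 * (n : ℝ) + α + β + 1 ≠ 0 →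
      ((n : ℝ) + β) * ((n : ℝ) - (-(α + 1)) - 1) *
        ((n : ℝ) * ((n : ℝ) + β - (-(α + 1)) - 1) *
          ((-(1 / 4)) * (2 * (n : ℝ) + β - (-(α + 1)) - 1) ^ 2 +
            (-(α + β + 2 * (N : ℝ) + 2) / (2 * (α + β + 2))) ^ 2 *
              (β - (-(α + 1)) + 1) ^ 2)) /
        ((2 * (n : ℝ) + β - (-(α + 1)) - 1) ^ 2 *
          (2 * (n : ℝ) + β - (-(α + 1))) *
          (2 * (n : ℝ) + β - (-(α + 1)) - 2)) =
      (n : ℝ) * ((n : ℝ) + α) * ((n : ℝ) + β) * ((n : ℝ) + α + β) *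
        ((n : ℝ) + α + β + (N : ℝ) + 1) * ((N : ℝ) - n + 1) /
        ((2 * (n : ℝ) + α + β - 1) * (2 * (n : ℝ) + α + β) ^ 2 *
          (2 * (n : ℝ) + α + β + 1)) := by
  intro n hn h1 h2 h3
  have e1 : 2 * (n : ℝ) + β - (-(α + 1)) - 1 = 2 * n + α + β := by ring
  have e2 : 2 * (n : ℝ) + β - (-(α + 1)) = 2 * n + α + β + 1 := by ring
  have e3 : 2 * (n : ℝ) + β - (-(α + 1)) - 2 = 2 * n + α + β - 1 := by ring
  have d1 : 2 * (n : ℝ) + β - (-(α + 1)) - 1 ≠ 0 := by rw [e1]; exact h2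
  have d2 : 2 * (n : ℝ) + β - (-(α + 1)) ≠ 0 := by rw [e2]; exact h3
  have d3 : 2 * (n : ℝ) + β - (-(α + 1)) - 2 ≠ 0 := by rw [e3]; exact h1
  rw [div_eq_div_iff (by exact mul_ne_zero (mul_ne_zero (pow_ne_zero 2 d1) d2) d3)
    (by exact mul_ne_zero (mul_ne_zero h1 (pow_ne_zero 2 h2)) h3)]
  field_simp
  ring
end

section
/- Let α, β ∈ ℝ and let N be a natural number, and assume 2n + α + β, 2n + α + β + 1 and 2n + α + β + 2 are all nonzero, and α + β + 2 ≠ 0. Set φ₀ = β, δ₀ = −(α + 1), v₀ = −(α + β + 2N + 2)/(2(α + β + 2)), and b̃₀ = (2N − α + β)/4. Then for every n ≥ 0: ½ (δ₀ + φ₀ + 1)(φ₀ − δ₀ + 1)(φ₀ − δ₀ − 1) v₀ / ((2n + φ₀ − δ₀ − 1)(2n + φ₀ − δ₀ + 1)) + b̃₀ = (n + α + β + 1)(n + α + 1)(N − n) / ((2n + α + β + 1)(2n + α + β + 2)) + n (n + α + β + N + 1)(n + β) / ((2n + α + β)(2n + α + β + 1)). -/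
/-- With `Δ = −¼`, `φ₀ = β`, `δ₀ = −(α+1)`, `v₀ = −(α+β+2N+2)/(2(α+β+2))` and
`b̃₀ = (2N − α + β)/4`, the diagonal coefficient `bₙ` of the algebra
representation equals the diagonal recurrence coefficient of the monic Hahn
polynomials `Qₙ^{(α,β)}` on `{0, 1, …, N}`. -/
theorem stmt_16 (α β : ℝ) (N : ℕ) (hαβ : α + β + 2 ≠ 0) :
    ∀ n : ℕ,
      2 * (n : ℝ) + α + β ≠ 0 →
      2 * (n : ℝ) + α + β + 1 ≠ 0 →
      2 * (n : ℝ) + α + β + 2 ≠ 0 →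
      (1 / 2) * ((-(α + 1)) + β + 1) * (β - (-(α + 1)) + 1) *
          (β - (-(α + 1)) - 1) *
          (-(α + β + 2 * (N : ℝ) + 2) / (2 * (α + β + 2))) /
          ((2 * (n : ℝ) + β - (-(α + 1)) - 1) *
            (2 * (n : ℝ) + β - (-(α + 1)) + 1)) +
        (2 * (N : ℝ) - α + β) / 4 =
      ((n : ℝ) + α + β + 1) * ((n : ℝ) + α + 1) * ((N : ℝ) - n) /
          ((2 * (n : ℝ) + α + β + 1) * (2 * (n : ℝ) + α + β + 2)) +
        (n : ℝ) * ((n : ℝ) + α + β + (N : ℝ) + 1) * ((n : ℝ) + β) /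
          ((2 * (n : ℝ) + α + β) * (2 * (n : ℝ) + α + β + 1)) := by
  intro n h0 h1 h2
  have e1 : 2 * (n : ℝ) + β - (-(α + 1)) - 1 = 2 * (n : ℝ) + α + β := by ring
  have e2 : 2 * (n : ℝ) + β - (-(α + 1)) + 1 = 2 * (n : ℝ) + α + β + 2 := by ring
  rw [e1, e2]
  field_simp
  ring
end

section
/- Let j ∈ ℕ, p ∈ {0, 1}, set N = 2j + p, let γ ∈ ℝ, and let n be a natural number with 0 ≤ n ≤ N. For t ∈ ℝ define Bₙ(t) = ½ (p − 1)(−2j − p + 2t − 1)(γ + p − 1) / ((2n − 2j − p + 2t − 1)(2n − 2j − p + 2t + 1)) + ½ (N + γ − 1). Then Bₙ(t) converges, as t → 0 with t ≠ 0, to −(N − n)(N − 2n − 2 + p + γ) / (2 (2n − N − p + 1)) − n (N − 2n + 2 − p − γ) / (2 (2n − N + p − 1)). -/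
open Filter Topology

/-!
For `p = 1` the prefactor `p - 1` kills the `t`-dependent term, so `Bₙ` is constant, and the two
terms of the limit share the denominator `2 (2n - N)`, which is odd hence nonzero; they add up to
`(N + γ - 1) / 2`. For `p = 0` the denominators of `Bₙ` at `t = 0` are the odd numbers `2n - N ± 1`,
so `Bₙ` is continuous at `0` and the limit is `Bₙ(0)`, which equals the para-Krawtchouk coefficient
by a rational-function identity.
-/

/-- The coefficient `Bₙ(t)`, with all parameters real. -/
noncomputable def diagCoeff (j p N n γ t : ℝ) : ℝ :=
  (1 / 2) * (p - 1) * (-2 * j - p + 2 * t - 1) * (γ + p - 1) /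
      ((2 * n - 2 * j - p + 2 * t - 1) * (2 * n - 2 * j - p + 2 * t + 1)) +
    (1 / 2) * (N + γ - 1)

/-- The diagonal recurrence coefficient of the monic para-Krawtchouk polynomials. -/
noncomputable def paraKrawtchoukDiag (p N n γ : ℝ) : ℝ :=
  -((N - n) * (N - 2 * n - 2 + p + γ)) / (2 * (2 * n - N - p + 1)) -
    n * (N - 2 * n + 2 - p - γ) / (2 * (2 * n - N + p - 1))

section

variable {j p N n γ : ℝ}

theorem diagCoeff_of_p_eq_one (hp : p = 1) (t : ℝ) :
    diagCoeff j p N n γ t = (N + γ - 1) / 2 := by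
  simp [diagCoeff, hp, div_eq_inv_mul]

theorem paraKrawtchoukDiag_of_p_eq_one (hp : p = 1) (hn : 2 * n - N ≠ 0) :
    paraKrawtchoukDiag p N n γ = (N + γ - 1) / 2 := by
  subst hp
  unfold paraKrawtchoukDiag
  rw [show 2 * n - N - 1 + 1 = 2 * n - N by ring, show 2 * n - N + 1 - 1 = 2 * n - N by ring,
    div_sub_div_same, div_eq_div_iff (mul_ne_zero two_ne_zero hn) two_ne_zero]
  ring

theorem continuousAt_diagCoeff
    (h₁ : 2 * n - 2 * j - p - 1 ≠ 0) (h₂ : 2 * n - 2 * j - p + 1 ≠ 0) :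
    ContinuousAt (diagCoeff j p N n γ) 0 := by
  refine (ContinuousAt.div (by fun_prop) (by fun_prop) ?_).add continuousAt_const
  simpa using mul_ne_zero h₁ h₂

theorem diagCoeff_zero_of_p_eq_zero (hp : p = 0) (hN : N = 2 * j)
    (h₁ : 2 * n - N - 1 ≠ 0) (h₂ : 2 * n - N + 1 ≠ 0) :
    diagCoeff j p N n γ 0 = paraKrawtchoukDiag p N n γ := by
  subst hp hN
  unfold diagCoeff paraKrawtchoukDiag
  rw [show 2 * n - 2 * j - 0 + 2 * 0 - 1 = 2 * n - 2 * j - 1 by ring,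
    show 2 * n - 2 * j - 0 + 2 * 0 + 1 = 2 * n - 2 * j + 1 by ring,
    show 2 * n - 2 * j - 0 + 1 = 2 * n - 2 * j + 1 by ring,
    show 2 * n - 2 * j + 0 - 1 = 2 * n - 2 * j - 1 by ring,
    div_add' _ _ _ (mul_ne_zero h₁ h₂),
    div_sub_div _ _ (mul_ne_zero two_ne_zero h₂) (mul_ne_zero two_ne_zero h₁),
    div_eq_div_iff (mul_ne_zero h₁ h₂)
      (mul_ne_zero (mul_ne_zero two_ne_zero h₂) (mul_ne_zero two_ne_zero h₁))]
  ring

theorem tendsto_diagCoeff_of_p_eq_one {l : Filter ℝ} (hp : p = 1) (hn : 2 * n - N ≠ 0) :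
    Tendsto (diagCoeff j p N n γ) l (𝓝 (paraKrawtchoukDiag p N n γ)) := by
  simp only [funext (diagCoeff_of_p_eq_one hp), paraKrawtchoukDiag_of_p_eq_one hp hn]
  exact tendsto_const_nhds

theorem tendsto_diagCoeff_of_p_eq_zero (hp : p = 0) (hN : N = 2 * j)
    (h₁ : 2 * n - N - 1 ≠ 0) (h₂ : 2 * n - N + 1 ≠ 0) :
    Tendsto (diagCoeff j p N n γ) (𝓝[≠] 0) (𝓝 (paraKrawtchoukDiag p N n γ)) := by
  rw [← diagCoeff_zero_of_p_eq_zero hp hN h₁ h₂]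
  refine (continuousAt_diagCoeff ?_ ?_).tendsto.mono_left nhdsWithin_le_nhds
  · simpa [hp, hN] using h₁
  · simpa [hp, hN] using h₂

end

theorem stmt_18_general (j p : ℕ) (hp : p = 0 ∨ p = 1) (N : ℕ) (hN : N = 2 * j + p)
    (γ : ℝ) (n : ℕ) :
    Tendsto (fun t : ℝ =>
        (1 / 2) * ((p : ℝ) - 1) * (-2 * (j : ℝ) - p + 2 * t - 1) * (γ + p - 1) /
          ((2 * (n : ℝ) - 2 * j - p + 2 * t - 1) *
            (2 * (n : ℝ) - 2 * j - p + 2 * t + 1)) +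
        (1 / 2) * ((N : ℝ) + γ - 1))
      (𝓝[≠] 0)
      (𝓝 (-(((N : ℝ) - n) * ((N : ℝ) - 2 * n - 2 + p + γ)) /
          (2 * (2 * (n : ℝ) - N - p + 1)) -
        (n : ℝ) * ((N : ℝ) - 2 * n + 2 - p - γ) /
          (2 * (2 * (n : ℝ) - N + p - 1)))) := by
  change Tendsto (diagCoeff j p N n γ) _ (𝓝 (paraKrawtchoukDiag p N n γ))
  rcases hp with rfl | rfl
  · refine tendsto_diagCoeff_of_p_eq_zero Nat.cast_zero (by simp [hN]) ?_ ?_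
    · exact_mod_cast (by omega : 2 * (n : ℤ) - N - 1 ≠ 0)
    · exact_mod_cast (by omega : 2 * (n : ℤ) - N + 1 ≠ 0)
  · exact tendsto_diagCoeff_of_p_eq_one Nat.cast_one
      (by exact_mod_cast (by omega : 2 * (n : ℤ) - N ≠ 0))

/-- The para-Krawtchouk limit of the diagonal coefficient `bₙ`:
as `t → 0` (with `t ≠ 0`), `Bₙ(t)` tends to the diagonal recurrence
coefficient of the monic para-Krawtchouk polynomials, where `N = 2j + p`. -/
theorem stmt_18 (j p : ℕ) (hp : p = 0 ∨ p = 1) (N : ℕ) (hN : N = 2 * j + p)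
    (γ : ℝ) (n : ℕ) (hnN : n ≤ N) :
    Tendsto (fun t : ℝ =>
        (1 / 2) * ((p : ℝ) - 1) * (-2 * (j : ℝ) - p + 2 * t - 1) * (γ + p - 1) /
          ((2 * (n : ℝ) - 2 * j - p + 2 * t - 1) *
            (2 * (n : ℝ) - 2 * j - p + 2 * t + 1)) +
        (1 / 2) * ((N : ℝ) + γ - 1))
      (𝓝[≠] 0)
      (𝓝 (-(((N : ℝ) - n) * ((N : ℝ) - 2 * n - 2 + p + γ)) /
          (2 * (2 * (n : ℝ) - N - p + 1)) -
        (n : ℝ) * ((N : ℝ) - 2 * n + 2 - p - γ) /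
          (2 * (2 * (n : ℝ) - N + p - 1)))) :=
  stmt_18_general j p hp N hN γ n
end
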